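/- Let p(z) = z^5 + (2+√2) z^4 + √2 z^3 + (2+2√2) z^2 + z + (2+√2). Then p(z) = (z + 2 + √2)(z^4 + √2 z^2 + 1), its zeros are -2-√2 and ±exp(±i·3π/8), and its 5×5 finite Hurwitz matrix H_5(p) has rank 3. -/
import Mathlib


open Real Complex

/-- The finite Hurwitz matrix of
`p(z) = z^5 + (2+√2) z^4 + √2 z^3 + (2+2√2) z^2 + z + (2+√2)`. -/
noncomputable def M17 : Matrix (Fin 5) (Fin 5) ℝ :=
  !![2 + Real.sqrt 2, 2 + 2 * Real.sqrt 2, 2 + Real.sqrt 2, 0, 0;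
     1, Real.sqrt 2, 1, 0, 0;
     0, 2 + Real.sqrt 2, 2 + 2 * Real.sqrt 2, 2 + Real.sqrt 2, 0;
     0, 1, Real.sqrt 2, 1, 0;
     0, 0, 2 + Real.sqrt 2, 2 + 2 * Real.sqrt 2, 2 + Real.sqrt 2]

/-- Left factor witnessing that the rows of `M17` span a 3-dimensional space. -/
noncomputable def L17 : Matrix (Fin 5) (Fin 3) ℝ :=
  !![2 + Real.sqrt 2, 0, 0;
     1, 0, 0;
     0, 2 + Real.sqrt 2, 0;
     0, 1, 0;
     0, 0, 1]

/-- Right factor: the three independent rows of `M17`. -/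
noncomputable def B17 : Matrix (Fin 3) (Fin 5) ℝ :=
  !![1, Real.sqrt 2, 1, 0, 0;
     0, 1, Real.sqrt 2, 1, 0;
     0, 0, 2 + Real.sqrt 2, 2 + 2 * Real.sqrt 2, 2 + Real.sqrt 2]

/-- Row selector picking rows 1, 3, 4. -/
def P17 : Matrix (Fin 3) (Fin 5) ℝ :=
  !![0,1,0,0,0; 0,0,0,1,0; 0,0,0,0,1]

/-- Column selector picking columns 0, 1, 2. -/
def Q17 : Matrix (Fin 5) (Fin 3) ℝ :=
  !![1,0,0; 0,1,0; 0,0,1; 0,0,0; 0,0,0]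

lemma hs2 : Real.sqrt 2 * Real.sqrt 2 = 2 := Real.mul_self_sqrt (by norm_num)

lemma hs2c : (Real.sqrt 2 : ℂ) * (Real.sqrt 2 : ℂ) = 2 := by
  norm_cast; exact_mod_cast hs2

lemma hM17 : M17 = L17 * B17 := by
  ext i j
  fin_cases i <;> fin_cases j <;>
    simp [M17, L17, B17, Matrix.mul_apply, Fin.sum_univ_three, Matrix.vecHead, Matrix.vecTail] <;>
    nlinarith [hs2, Real.sqrt_nonneg 2]

lemma hrank_le : M17.rank ≤ 3 := by
  rw [hM17]
  calc (L17 * B17).rank ≤ B17.rank := Matrix.rank_mul_le_right _ _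
    _ ≤ 3 := by simpa using Matrix.rank_le_card_height B17

lemma hPQ : P17 * M17 * Q17 =
    !![1, Real.sqrt 2, 1; 0, 1, Real.sqrt 2; 0, 0, 2 + Real.sqrt 2] := by
  ext i j
  fin_cases i <;> fin_cases j <;>
    simp [M17, P17, Q17, Matrix.mul_apply, Fin.sum_univ_five, Fin.sum_univ_three,
      Matrix.vecHead, Matrix.vecTail]

lemma hrank_ge : 3 ≤ M17.rank := by
  have h1 : (P17 * M17 * Q17).rank = 3 := by
    rw [hPQ]
    have : IsUnit (!![1, Real.sqrt 2, 1; 0, 1, Real.sqrt 2; 0, 0, 2 + Real.sqrt 2] :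
        Matrix (Fin 3) (Fin 3) ℝ).det := by
      rw [Matrix.det_fin_three]
      simp [Matrix.vecHead, Matrix.vecTail]
      nlinarith [Real.sqrt_nonneg 2]
    simpa using Matrix.rank_of_isUnit _ (Matrix.isUnit_iff_isUnit_det _ |>.mpr this)
  calc 3 = (P17 * M17 * Q17).rank := h1.symm
    _ ≤ (P17 * M17).rank := Matrix.rank_mul_le_left _ _
    _ ≤ M17.rank := Matrix.rank_mul_le_right _ _

noncomputable def w1 : ℂ := Complex.exp ((3 * Real.pi / 8) * Complex.I)
noncomputable def w2 : ℂ := Complex.exp (-((3 * Real.pi / 8) : ℂ) * Complex.I)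

lemma hww : w1 * w2 = 1 := by
  rw [w1, w2, ← Complex.exp_add]
  rw [show ((3 * Real.pi / 8 : ℂ)) * Complex.I + (-((3 * Real.pi / 8) : ℂ)) * Complex.I = 0 by
    ring]
  exact Complex.exp_zero

lemma hsq : w1 ^ 2 * w2 ^ 2 = 1 := by rw [← mul_pow, hww, one_pow]

lemma hsum : w1 ^ 2 + w2 ^ 2 = -(Real.sqrt 2 : ℂ) := by
  have h1 : w1 ^ 2 = Complex.exp (((3 * Real.pi / 4 : ℝ) : ℂ) * Complex.I) := by
    rw [w1, ← Complex.exp_nat_mul]; norm_num; ring_nf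
  have h2 : w2 ^ 2 = Complex.exp (-((3 * Real.pi / 4 : ℝ) : ℂ) * Complex.I) := by
    rw [w2, ← Complex.exp_nat_mul]; norm_num; ring_nf
  rw [h1, h2, Complex.exp_mul_I, Complex.exp_mul_I, Complex.cos_neg, Complex.sin_neg]
  have hc : Complex.cos ((3 * Real.pi / 4 : ℝ) : ℂ) = ((Real.cos (3 * Real.pi / 4) : ℝ) : ℂ) := by
    rw [Complex.ofReal_cos]
  have hcv : Real.cos (3 * Real.pi / 4) = -(Real.sqrt 2 / 2) := by
    rw [show (3 * Real.pi / 4) = Real.pi - Real.pi / 4 by ring, Real.cos_pi_sub,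
      Real.cos_pi_div_four]
  rw [hc, hcv]; push_cast; ring

lemma hquart (z : ℂ) : z ^ 4 + (Real.sqrt 2 : ℂ) * z ^ 2 + 1 =
    (z - w1) * (z + w1) * ((z - w2) * (z + w2)) := by
  linear_combination z ^ 2 * hsum - hsq

/-- The polynomial `p(z) = z^5 + (2+√2) z^4 + √2 z^3 + (2+2√2) z^2 + z + (2+√2)`
factors as `(z + 2 + √2)(z^4 + √2 z^2 + 1)`, its zeros are `-2-√2` and
`±exp(±i·3π/8)`, and its finite Hurwitz matrix has rank 3. -/
theorem example_rank_three :
    (∀ z : ℂ,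
      z ^ 5 + (2 + (Real.sqrt 2 : ℂ)) * z ^ 4 + (Real.sqrt 2 : ℂ) * z ^ 3 +
          (2 + 2 * (Real.sqrt 2 : ℂ)) * z ^ 2 + z + (2 + (Real.sqrt 2 : ℂ)) =
        (z + 2 + (Real.sqrt 2 : ℂ)) * (z ^ 4 + (Real.sqrt 2 : ℂ) * z ^ 2 + 1)) ∧
    (∀ z : ℂ,
      z ^ 5 + (2 + (Real.sqrt 2 : ℂ)) * z ^ 4 + (Real.sqrt 2 : ℂ) * z ^ 3 +
          (2 + 2 * (Real.sqrt 2 : ℂ)) * z ^ 2 + z + (2 + (Real.sqrt 2 : ℂ)) = 0 ↔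
        (z = -(2 + (Real.sqrt 2 : ℂ)) ∨
          z = Complex.exp ((3 * Real.pi / 8) * Complex.I) ∨
          z = -Complex.exp ((3 * Real.pi / 8) * Complex.I) ∨
          z = Complex.exp (-((3 * Real.pi / 8) : ℂ) * Complex.I) ∨
          z = -Complex.exp (-((3 * Real.pi / 8) : ℂ) * Complex.I))) ∧
    M17.rank = 3 := by
  have part1 : ∀ z : ℂ,
      z ^ 5 + (2 + (Real.sqrt 2 : ℂ)) * z ^ 4 + (Real.sqrt 2 : ℂ) * z ^ 3 +
          (2 + 2 * (Real.sqrt 2 : ℂ)) * z ^ 2 + z + (2 + (Real.sqrt 2 : ℂ)) =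
        (z + 2 + (Real.sqrt 2 : ℂ)) * (z ^ 4 + (Real.sqrt 2 : ℂ) * z ^ 2 + 1) := by
    intro z
    linear_combination (-(z ^ 2)) * hs2c
  refine ⟨part1, ?_, le_antisymm hrank_le hrank_ge⟩
  intro z
  rw [part1 z, hquart z]
  rw [show Complex.exp ((3 * Real.pi / 8) * Complex.I) = w1 from rfl,
      show Complex.exp (-((3 * Real.pi / 8) : ℂ) * Complex.I) = w2 from rfl]
  constructor
  · intro h
    rcases mul_eq_zero.mp h with h | h
    · left; linear_combination h
    · rcases mul_eq_zero.mp h with h | h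
      · rcases mul_eq_zero.mp h with h | h
        · right; left; linear_combination h
        · right; right; left; linear_combination h
      · rcases mul_eq_zero.mp h with h | h
        · right; right; right; left; linear_combination h
        · right; right; right; right; linear_combination h
  · rintro (rfl | rfl | rfl | rfl | rfl) <;> ring
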